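/- Let W ⊆ V be a subspace, B := W ⊕ V*, and B^⊥ = {0} ⊕ W°. Let J : V ⊕ V* → V ⊕ V* be a linear map with J∘J = −id, orthogonal with respect to the canonical pairing, and assume B = (B ∩ J(B)) + B^⊥. Let s : B → W ⊕ W* be the projection s(X+ξ) = X + ξ|_W, and equip W ⊕ W* with its own canonical pairing. Then there exists a unique linear map J' : W ⊕ W* → W ⊕ W* such that J'(s(b)) = s(J(b)) for every b ∈ B ∩ J(B); moreover J'∘J' = −id and J' is orthogonal with respect to the canonical pairing on W ⊕ W*. -/

import Mathlib

/-- The canonical symmetric pairing on `U ⊕ U*`. -/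
noncomputable def pairing {U : Type*} [AddCommGroup U] [Module ℝ U]
    (p q : U × Module.Dual ℝ U) : ℝ :=
  (1 / 2) * (p.2 q.1 + q.2 p.1)

/-- `J'` is induced by `J` on `W ⊕ W*` if `J'(s(b)) = s(J(b))` for every `b ∈ B ∩ J(B)`,
where `B = W ⊕ V*` and `s(X+ξ) = X + ξ|_W`. -/
def Descends {V : Type*} [AddCommGroup V] [Module ℝ V] (W : Submodule ℝ V)
    (J : (V × Module.Dual ℝ V) →ₗ[ℝ] (V × Module.Dual ℝ V))
    (J' : (↥W × Module.Dual ℝ ↥W) →ₗ[ℝ] (↥W × Module.Dual ℝ ↥W)) : Prop :=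
  ∀ (p : V × Module.Dual ℝ V)
    (hp : p ∈ W.prod ⊤ ⊓ Submodule.map J (W.prod ⊤)) (hJp : (J p).1 ∈ W),
    J' (⟨p.1, (Submodule.mem_prod.mp (Submodule.mem_inf.mp hp).1).1⟩, p.2 ∘ₗ W.subtype)
      = (⟨(J p).1, hJp⟩, (J p).2 ∘ₗ W.subtype)

/-- If `J` is orthogonal with `J² = -id` and `B = (B ∩ J(B)) + B^⊥`, then there is a unique
linear map `J'` on `W ⊕ W*` with `J'(s(b)) = s(J(b))` for all `b ∈ B ∩ J(B)`; moreover
`J'² = -id` and `J'` is orthogonal for the canonical pairing on `W ⊕ W*`. -/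
theorem stmt_9 {V : Type*} [AddCommGroup V] [Module ℝ V] [FiniteDimensional ℝ V]
    (W : Submodule ℝ V)
    (J : (V × Module.Dual ℝ V) →ₗ[ℝ] (V × Module.Dual ℝ V))
    (hJ2 : J ∘ₗ J = -LinearMap.id)
    (hJorth : ∀ x y : V × Module.Dual ℝ V, pairing (J x) (J y) = pairing x y)
    (hdecomp : W.prod ⊤ = (W.prod ⊤ ⊓ Submodule.map J (W.prod ⊤))
        ⊔ (⊥ : Submodule ℝ V).prod W.dualAnnihilator) :
    ∃ J' : (↥W × Module.Dual ℝ ↥W) →ₗ[ℝ] (↥W × Module.Dual ℝ ↥W),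
      Descends W J J' ∧ (∀ K, Descends W J K → K = J') ∧
      J' ∘ₗ J' = -LinearMap.id ∧
      (∀ x y : ↥W × Module.Dual ℝ ↥W, pairing (J' x) (J' y) = pairing x y) := by
  classical
  set B : Submodule ℝ (V × Module.Dual ℝ V) := W.prod ⊤ with hBdef
  set D : Submodule ℝ (V × Module.Dual ℝ V) := B ⊓ Submodule.map J B with hDdef
  have hJJ : ∀ p, J (J p) = -p := fun p => by
    have := LinearMap.ext_iff.mp hJ2 p
    simpa using this
  -- J maps D into D
  have hJD : ∀ p ∈ D, J p ∈ D := by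
    rintro p ⟨hpB, q, hqB, rfl⟩
    refine Submodule.mem_inf.mpr ⟨?_, ⟨J q, hpB, rfl⟩⟩
    rw [hJJ]
    exact B.neg_mem hqB
  have memW : ∀ d : D, (d : V × Module.Dual ℝ V).1 ∈ W :=
    fun d => (Submodule.mem_prod.mp d.2.1).1
  -- the projection s : D → W × W*
  let g : D →ₗ[ℝ] (↥W × Module.Dual ℝ ↥W) :=
    { toFun := fun d => (⟨(d : V × Module.Dual ℝ V).1, memW d⟩,
        (d : V × Module.Dual ℝ V).2 ∘ₗ W.subtype)
      map_add' := fun a b => by ext <;> rfl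
      map_smul' := fun c a => by ext <;> rfl }
  let JD : D →ₗ[ℝ] D := J.restrict hJD
  let f : D →ₗ[ℝ] (↥W × Module.Dual ℝ ↥W) := g ∘ₗ JD
  -- g is surjective
  have hg_surj : Function.Surjective g := by
    rintro ⟨w, u⟩
    obtain ⟨ξ, hξ⟩ := Subspace.dualRestrict_surjective (W := W) u
    have hmem : ((w : V), ξ) ∈ B := Submodule.mem_prod.mpr ⟨w.2, trivial⟩
    rw [hdecomp] at hmem
    obtain ⟨d, hd, k, hk, hdk⟩ := Submodule.mem_sup.mp hmem
    refine ⟨⟨d, hd⟩, ?_⟩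
    obtain ⟨hk1, hk2⟩ := Submodule.mem_prod.mp hk
    have hk1' : k.1 = 0 := hk1
    have h1 : d.1 + k.1 = (w : V) := congrArg Prod.fst hdk
    have h2 : d.2 + k.2 = ξ := congrArg Prod.snd hdk
    apply Prod.ext
    · apply Subtype.ext
      show d.1 = (w : V)
      simpa [hk1'] using h1
    · ext x
      have hx : d.2 x + k.2 x = ξ x := by rw [← h2]; rfl
      have hkx : k.2 (x : V) = 0 :=
        (Submodule.mem_dualAnnihilator _).mp hk2 x x.2
      have hux : ξ (x : V) = u x := by rw [← hξ]; rfl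
      show d.2 (x : V) = u x
      rw [← hux]
      simpa [hkx] using hx
  -- kernel of g is contained in kernel of f
  have hker : LinearMap.ker g ≤ LinearMap.ker f := by
    intro d hd
    rw [LinearMap.mem_ker] at hd ⊢
    have hd1 : (d : V × Module.Dual ℝ V).1 = 0 := by
      have := congrArg Prod.fst hd
      exact Subtype.ext_iff.mp this
    have hd2 : ∀ x ∈ W, (d : V × Module.Dual ℝ V).2 x = 0 := by
      intro x hx
      have := congrArg Prod.snd hd
      exact LinearMap.ext_iff.mp this ⟨x, hx⟩
    -- J d is orthogonal to all of B
    have hperp : ∀ b ∈ B, pairing (J (d : V × Module.Dual ℝ V)) b = 0 := by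
      intro b hb
      rw [hdecomp] at hb
      obtain ⟨b', hb', k, hk, rfl⟩ := Submodule.mem_sup.mp hb
      have e1 : pairing (J (d : V × Module.Dual ℝ V)) b' = 0 := by
        obtain ⟨c, hcB, rfl⟩ := (Submodule.mem_inf.mp hb').2
        rw [hJorth]
        have hc1 : c.1 ∈ W := (Submodule.mem_prod.mp hcB).1
        simp [pairing, hd1, hd2 c.1 hc1]
      have e2 : pairing (J (d : V × Module.Dual ℝ V)) k = 0 := by
        have hk1 : k.1 = 0 := (Submodule.mem_prod.mp hk).1
        have hk2 : k.2 ∈ W.dualAnnihilator := (Submodule.mem_prod.mp hk).2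
        have hJd1 : (J (d : V × Module.Dual ℝ V)).1 ∈ W :=
          (Submodule.mem_prod.mp (Submodule.mem_inf.mp (hJD _ d.2)).1).1
        have := (Submodule.mem_dualAnnihilator _).mp hk2 _ hJd1
        simp [pairing, hk1, this]
      have : pairing (J (d : V × Module.Dual ℝ V)) (b' + k)
          = pairing (J (d : V × Module.Dual ℝ V)) b'
            + pairing (J (d : V × Module.Dual ℝ V)) k := by
        simp [pairing]; ring
      rw [this, e1, e2, add_zero]
    have hJd1 : (J (d : V × Module.Dual ℝ V)).1 = 0 := by
      rw [← Module.forall_dual_apply_eq_zero_iff ℝ]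
      intro φ
      have hmem : ((0 : V), φ) ∈ B := Submodule.mem_prod.mpr ⟨W.zero_mem, trivial⟩
      have := hperp _ hmem
      simp only [pairing] at this
      have h0 : (J (d : V × Module.Dual ℝ V)).2 (0 : V) = 0 := map_zero _
      rw [h0] at this
      linarith [this]
    have hJd2 : ∀ x ∈ W, (J (d : V × Module.Dual ℝ V)).2 x = 0 := by
      intro x hx
      have hmem : ((x : V), (0 : Module.Dual ℝ V)) ∈ B :=
        Submodule.mem_prod.mpr ⟨hx, trivial⟩
      have := hperp _ hmem
      simp only [pairing] at this
      have h0 : (0 : Module.Dual ℝ V) (J (d : V × Module.Dual ℝ V)).1 = 0 := rfl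
      rw [h0] at this
      linarith [this]
    apply Prod.ext
    · exact Subtype.ext hJd1
    · ext x
      exact hJd2 x x.2
  -- a right inverse of g, and the induced map
  obtain ⟨h, hh⟩ := g.exists_rightInverse_of_surjective (LinearMap.range_eq_top.mpr hg_surj)
  have key : ∀ d : D, (f ∘ₗ h) (g d) = f d := by
    intro d
    have h1 : g (h (g d)) = g d := LinearMap.ext_iff.mp hh (g d)
    have h2 : h (g d) - d ∈ LinearMap.ker g := by
      rw [LinearMap.mem_ker, map_sub g (h (g d)) d, h1, sub_self]
    have h3 : f (h (g d) - d) = 0 := hker h2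
    rw [map_sub f (h (g d)) d, sub_eq_zero] at h3
    exact h3
  have hdesc : Descends W J (f ∘ₗ h) := by
    intro p hp hJp
    have := key ⟨p, hp⟩
    convert this using 2 <;> rfl
  have hJDJD : ∀ d : D, JD (JD d) = -d := by
    intro d
    apply Subtype.ext
    show J (J (d : V × Module.Dual ℝ V)) = -(d : V × Module.Dual ℝ V)
    exact hJJ _
  have gpair : ∀ a b : D, pairing (g a) (g b)
      = pairing (a : V × Module.Dual ℝ V) (b : V × Module.Dual ℝ V) := fun a b => rfl
  refine ⟨f ∘ₗ h, hdesc, ?_, ?_, ?_⟩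
  · -- uniqueness
    intro K hK
    apply LinearMap.ext
    intro x
    obtain ⟨d, rfl⟩ := hg_surj x
    have hJp : (J (d : V × Module.Dual ℝ V)).1 ∈ W :=
      (Submodule.mem_prod.mp (Submodule.mem_inf.mp (hJD _ d.2)).1).1
    have hKd := hK (d : V × Module.Dual ℝ V) d.2 hJp
    have hgd : K (g d) = f d := by convert hKd using 2 <;> rfl
    rw [hgd, key d]
  · -- J'² = -id
    apply LinearMap.ext
    intro x
    obtain ⟨d, rfl⟩ := hg_surj x
    have e1 : (f ∘ₗ h) (g d) = g (JD d) := key d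
    rw [LinearMap.comp_apply, e1]
    have e2 : (f ∘ₗ h) (g (JD d)) = g (JD (JD d)) := key (JD d)
    rw [e2, hJDJD, map_neg g (d : ↥D)]
    rfl
  · -- orthogonality
    intro x y
    obtain ⟨d, rfl⟩ := hg_surj x
    obtain ⟨d', rfl⟩ := hg_surj y
    have e1 : (f ∘ₗ h) (g d) = g (JD d) := key d
    have e2 : (f ∘ₗ h) (g d') = g (JD d') := key d'
    rw [e1, e2, gpair, gpair]
    exact hJorth _ _
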